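/- arXiv:1904.01408 — 3 statements merged into one kernel-verified Lean document; each statement's English description precedes it below -/
import Mathlib

section
/- With v_3(s) = Σ_{n=1}^∞ s^{2n}/((n-1)!·n!), the limit as s → 0⁺ of v_3(s) · ∫_s^∞ t / v_3(t)² dt equals 1/2. -/
open MeasureTheory Filter

noncomputable def v3 (s : ℝ) : ℝ :=
  ∑' n : ℕ, s ^ (2 * (n + 1)) / ((Nat.factorial n : ℝ) * (Nat.factorial (n + 1)))

/-!
Write `v₃(t) = t² g(t)`, where `g(t) = Σ t^{2n}/(n!(n+1)!)` is increasing on `[0, ∞)` and squeezed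
between `1` and `exp(t²)`, so `g(t) → 1` as `t → 0⁺`. The integrand is `φ(t) t⁻³` with the
antitone weight `φ = g⁻²`. On `(s, ∞)` the weight is at most `φ(s)`, which gives
`s² ∫_s^∞ φ(t) t⁻³ dt ≤ φ(s)/2`; on `(s, √s]` it is at least `φ(√s)`, which gives the lower bound
`φ(√s)(1 - s)/2`. Both bounds tend to `1/2`, and the extra factor `g(s)` tends to `1`.
-/

open Set Real Topology

section AntitoneWeight

variable {φ : ℝ → ℝ} {p s : ℝ}

theorem integrableOn_mul_rpow_neg_Ioi (hp : 1 < p) (hφ : AntitoneOn φ (Ioi 0))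
    (hφ₀ : ∀ t ∈ Ioi 0, 0 ≤ φ t) (hs : 0 < s) :
    IntegrableOn (fun t => φ t * t ^ (-p)) (Ioi s) := by
  have hmeas : AEMeasurable φ (volume.restrict (Ioi s)) :=
    aemeasurable_restrict_of_antitoneOn measurableSet_Ioi (hφ.mono (Ioi_subset_Ioi hs.le))
  refine Integrable.mono'
    ((integrableOn_Ioi_rpow_of_lt (a := -p) (by linarith) hs).const_mul (φ s))
    (hmeas.mul (measurable_id.pow_const _).aemeasurable).aestronglyMeasurable ?_
  filter_upwards [ae_restrict_mem measurableSet_Ioi] with t (ht : s < t)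
  have ht₀ : 0 < t := hs.trans ht
  rw [norm_mul, norm_of_nonneg (hφ₀ t ht₀), norm_of_nonneg (rpow_nonneg ht₀.le _)]
  exact mul_le_mul_of_nonneg_right (hφ hs ht₀ ht.le) (rpow_nonneg ht₀.le _)

theorem rpow_sub_one_mul_setIntegral_Ioi_le (hp : 1 < p) (hφ : AntitoneOn φ (Ioi 0))
    (hφ₀ : ∀ t ∈ Ioi 0, 0 ≤ φ t) (hs : 0 < s) :
    s ^ (p - 1) * ∫ t in Ioi s, φ t * t ^ (-p) ≤ φ s / (p - 1) := by
  have hint : ∫ t in Ioi s, φ t * t ^ (-p) ≤ ∫ t in Ioi s, φ s * t ^ (-p) :=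
    setIntegral_mono_on (integrableOn_mul_rpow_neg_Ioi hp hφ hφ₀ hs)
      ((integrableOn_Ioi_rpow_of_lt (by linarith) hs).const_mul (φ s)) measurableSet_Ioi
      fun t (ht : s < t) => mul_le_mul_of_nonneg_right (hφ hs (hs.trans ht) ht.le)
        (rpow_nonneg (hs.trans ht).le _)
  have hcancel : s ^ (p - 1) * s ^ (-p + 1) = 1 := by
    rw [← rpow_add hs]; simp
  calc s ^ (p - 1) * ∫ t in Ioi s, φ t * t ^ (-p)
      ≤ s ^ (p - 1) * ∫ t in Ioi s, φ s * t ^ (-p) :=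
        mul_le_mul_of_nonneg_left hint (rpow_nonneg hs.le _)
    _ = φ s / (p - 1) := by
      rw [integral_const_mul, integral_Ioi_rpow_of_lt (by linarith) hs]
      have : -p + 1 ≠ 0 := by linarith
      have : p - 1 ≠ 0 := by linarith
      field_simp
      linear_combination (-(p - 1) * φ s) * hcancel

theorem mul_integral_Ioc_rpow_le_setIntegral_Ioi {c : ℝ} (hp : 1 < p) (hφ : AntitoneOn φ (Ioi 0))
    (hφ₀ : ∀ t ∈ Ioi 0, 0 ≤ φ t) (hs : 0 < s) (hsc : s ≤ c) :
    φ c * ((c ^ (-p + 1) - s ^ (-p + 1)) / (-p + 1)) ≤ ∫ t in Ioi s, φ t * t ^ (-p) := by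
  have hsub : Ioc s c ⊆ Ioi s := Ioc_subset_Ioi_self
  have hint := integrableOn_mul_rpow_neg_Ioi hp hφ hφ₀ hs
  calc φ c * ((c ^ (-p + 1) - s ^ (-p + 1)) / (-p + 1))
      = ∫ t in Ioc s c, φ c * t ^ (-p) := by
        rw [integral_const_mul, ← intervalIntegral.integral_of_le hsc, integral_rpow]
        refine Or.inr ⟨by linarith, ?_⟩
        rw [uIcc_of_le hsc]
        exact fun h => hs.not_ge h.1
    _ ≤ ∫ t in Ioc s c, φ t * t ^ (-p) :=
        setIntegral_mono_on
          (IntegrableOn.mono_set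
            ((integrableOn_Ioi_rpow_of_lt (by linarith) hs).const_mul (φ c)) hsub)
          (hint.mono_set hsub) measurableSet_Ioc
          fun t ht => mul_le_mul_of_nonneg_right (hφ (hs.trans ht.1) (hs.trans_le hsc) ht.2)
            (rpow_nonneg (hs.trans ht.1).le _)
    _ ≤ ∫ t in Ioi s, φ t * t ^ (-p) := by
        refine setIntegral_mono_set hint ?_ hsub.eventuallyLE
        filter_upwards [ae_restrict_mem measurableSet_Ioi] with t (ht : s < t)
        exact mul_nonneg (hφ₀ t (hs.trans ht)) (rpow_nonneg (hs.trans ht).le _)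

theorem le_rpow_sub_one_mul_setIntegral_Ioi (hp : 1 < p) (hφ : AntitoneOn φ (Ioi 0))
    (hφ₀ : ∀ t ∈ Ioi 0, 0 ≤ φ t) (hs : 0 < s) (hs₁ : s ≤ 1) :
    φ (√s) * (1 - s ^ ((p - 1) / 2)) / (p - 1) ≤ s ^ (p - 1) * ∫ t in Ioi s, φ t * t ^ (-p) := by
  have hsqrt : s ≤ √s := by
    rw [le_sqrt hs.le hs.le]; nlinarith
  have hcancel : s ^ (p - 1) * s ^ (-p + 1) = 1 := by
    rw [← rpow_add hs]; simp
  have hcancel' : s ^ (p - 1) * √s ^ (-p + 1) = s ^ ((p - 1) / 2) := by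
    rw [sqrt_eq_rpow, ← rpow_mul hs.le, ← rpow_add hs]; ring_nf
  calc φ (√s) * (1 - s ^ ((p - 1) / 2)) / (p - 1)
      = s ^ (p - 1) * (φ (√s) * ((√s ^ (-p + 1) - s ^ (-p + 1)) / (-p + 1))) := by
        have : -p + 1 ≠ 0 := by linarith
        have : p - 1 ≠ 0 := by linarith
        field_simp
        linear_combination (p - 1) * φ √s * hcancel - (p - 1) * φ √s * hcancel'
    _ ≤ s ^ (p - 1) * ∫ t in Ioi s, φ t * t ^ (-p) := by
        gcongr
        exact mul_integral_Ioc_rpow_le_setIntegral_Ioi hp hφ hφ₀ hs hsqrt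

theorem tendsto_sqrt_nhdsGT_zero : Tendsto (√·) (𝓝[>] (0 : ℝ)) (𝓝[>] 0) :=
  tendsto_nhdsWithin_iff.2 ⟨(continuous_sqrt.tendsto' 0 0 sqrt_zero).mono_left nhdsWithin_le_nhds,
    eventually_nhdsWithin_of_forall fun _ hs => sqrt_pos.2 hs⟩

theorem tendsto_rpow_sub_one_mul_setIntegral_Ioi {L : ℝ} (hp : 1 < p) (hφ : AntitoneOn φ (Ioi 0))
    (hφ₀ : ∀ t ∈ Ioi 0, 0 ≤ φ t) (hL : Tendsto φ (𝓝[>] 0) (𝓝 L)) :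
    Tendsto (fun s => s ^ (p - 1) * ∫ t in Ioi s, φ t * t ^ (-p)) (𝓝[>] 0) (𝓝 (L / (p - 1))) := by
  have hpow : Tendsto (fun s : ℝ => s ^ ((p - 1) / 2)) (𝓝[>] 0) (𝓝 0) := by
    have := (continuousAt_rpow_const 0 ((p - 1) / 2) (Or.inr (by linarith))).tendsto
    rw [zero_rpow (by linarith)] at this
    exact this.mono_left nhdsWithin_le_nhds
  have hlower : Tendsto (fun s => φ (√s) * (1 - s ^ ((p - 1) / 2)) / (p - 1)) (𝓝[>] 0)
      (𝓝 (L / (p - 1))) := by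
    simpa using ((hL.comp tendsto_sqrt_nhdsGT_zero).mul
      ((tendsto_const_nhds (x := (1 : ℝ))).sub hpow)).div_const (p - 1)
  refine tendsto_of_tendsto_of_tendsto_of_le_of_le' hlower (hL.div_const (p - 1)) ?_ ?_
  · filter_upwards [Ioo_mem_nhdsGT zero_lt_one] with s hs
    exact le_rpow_sub_one_mul_setIntegral_Ioi hp hφ hφ₀ hs.1 hs.2.le
  · filter_upwards [self_mem_nhdsWithin] with s hs
    exact rpow_sub_one_mul_setIntegral_Ioi_le hp hφ hφ₀ hs

end AntitoneWeight

noncomputable def v3DivSq (s : ℝ) : ℝ :=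
  ∑' n : ℕ, s ^ (2 * n) / ((Nat.factorial n : ℝ) * (Nat.factorial (n + 1)))

theorem v3DivSq_term_le_exp_term (s : ℝ) (n : ℕ) :
    s ^ (2 * n) / ((Nat.factorial n : ℝ) * (Nat.factorial (n + 1)))
      ≤ (s ^ 2) ^ n / n.factorial := by
  rw [pow_mul]
  gcongr
  exact le_mul_of_one_le_right (by positivity) (mod_cast Nat.factorial_pos _)

theorem summable_v3DivSq (s : ℝ) :
    Summable fun n : ℕ => s ^ (2 * n) / ((Nat.factorial n : ℝ) * (Nat.factorial (n + 1))) :=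
  .of_nonneg_of_le (fun n => by rw [pow_mul]; positivity) (v3DivSq_term_le_exp_term s)
    (summable_pow_div_factorial (s ^ 2))

theorem one_le_v3DivSq (s : ℝ) : 1 ≤ v3DivSq s := by
  simpa [v3DivSq] using (summable_v3DivSq s).le_tsum 0 fun n _ => by rw [pow_mul]; positivity

theorem v3DivSq_pos (s : ℝ) : 0 < v3DivSq s := one_pos.trans_le (one_le_v3DivSq s)

theorem v3DivSq_le_exp (s : ℝ) : v3DivSq s ≤ exp (s ^ 2) := by
  rw [exp_eq_exp_ℝ, NormedSpace.exp_eq_tsum_div]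
  exact (summable_v3DivSq s).tsum_le_tsum (v3DivSq_term_le_exp_term s)
    (summable_pow_div_factorial (s ^ 2))

theorem monotoneOn_v3DivSq : MonotoneOn v3DivSq (Ici 0) := fun a ha b _ hab =>
  (summable_v3DivSq a).tsum_le_tsum (fun n => by simp only [mem_Ici] at ha; gcongr)
    (summable_v3DivSq b)

theorem tendsto_v3DivSq_zero : Tendsto v3DivSq (𝓝 0) (𝓝 1) := by
  have hexp : Tendsto (fun s : ℝ => exp (s ^ 2)) (𝓝 0) (𝓝 1) :=
    (by fun_prop : Continuous fun s : ℝ => exp (s ^ 2)).tendsto' 0 1 (by simp)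
  exact tendsto_of_tendsto_of_tendsto_of_le_of_le tendsto_const_nhds hexp one_le_v3DivSq
    v3DivSq_le_exp

theorem v3_eq_sq_mul (s : ℝ) : v3 s = s ^ 2 * v3DivSq s := by
  rw [v3, v3DivSq, ← tsum_mul_left]
  congr 1 with n
  rw [mul_add, pow_add, mul_one]
  ring

theorem div_v3_sq_eq {t : ℝ} (ht : 0 < t) :
    t / v3 t ^ 2 = (v3DivSq t)⁻¹ ^ 2 * t ^ (-3 : ℝ) := by
  rw [v3_eq_sq_mul, rpow_neg ht.le, show (3 : ℝ) = (3 : ℕ) by norm_num, rpow_natCast]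
  have := (v3DivSq_pos t).ne'
  field_simp

theorem antitoneOn_inv_v3DivSq_sq : AntitoneOn (fun t => (v3DivSq t)⁻¹ ^ 2) (Ioi 0) :=
  fun a ha b hb hab => pow_le_pow_left₀ (inv_nonneg.2 (v3DivSq_pos b).le)
    (inv_anti₀ (v3DivSq_pos a) (monotoneOn_v3DivSq (mem_Ici_of_Ioi ha) (mem_Ici_of_Ioi hb) hab)) 2

/-- `lim_{s → 0⁺} v₃(s) · ∫_s^∞ t / v₃(t)² dt = 1/2`. -/
theorem decaying_solution_value_at_zero :
    Tendsto (fun s : ℝ => v3 s * ∫ t in Set.Ioi s, t / (v3 t) ^ 2)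
      (nhdsWithin 0 (Set.Ioi 0)) (nhds (1 / 2)) := by
  have hweight : Tendsto (fun t => (v3DivSq t)⁻¹ ^ 2) (𝓝[>] 0) (𝓝 1) := by
    simpa using ((tendsto_v3DivSq_zero.inv₀ one_ne_zero).pow 2).mono_left nhdsWithin_le_nhds
  have hlim := (tendsto_v3DivSq_zero.mono_left nhdsWithin_le_nhds).mul
    (tendsto_rpow_sub_one_mul_setIntegral_Ioi (p := 3) (by norm_num) antitoneOn_inv_v3DivSq_sq
      (fun t _ => by positivity) hweight)
  rw [show (1 : ℝ) / 2 = 1 * (1 / (3 - 1)) by norm_num]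
  refine hlim.congr' (eventually_nhdsWithin_of_forall fun s (hs : 0 < s) => ?_)
  dsimp only
  rw [v3_eq_sq_mul, setIntegral_congr_fun measurableSet_Ioi fun t ht => div_v3_sq_eq (hs.trans ht),
    show (3 : ℝ) - 1 = (2 : ℕ) by norm_num, rpow_natCast]
  ring
end

section
/- The recurrence b_n = p_n·b_{n-1} - q_n·p_n for n ≥ 2, with p_k = 1/((k-1)k) and q_k = (2k-1)/((k-1)!·k!), has solution b_n = (b_1 - 2ξ̃_n)/(n!·(n-1)!), where ξ̃_n = (1/2)·Σ_{k=2}^n (1/k + 1/(k-1)). -/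
/-!
Multiplying by `w_n = n! (n-1)!` makes the recurrence telescope: since `p_n w_n = w_{n-1}` and
`q_n w_n = 2n - 1`, the sequence `c_n = w_n b_n` satisfies `c_n = c_{n-1} - (2n-1)/((n-1)n)`,
and `(2n-1)/((n-1)n) = 1/n + 1/(n-1)`, so `c_n = b_1 - ∑_{k=2}^n (1/k + 1/(k-1))`.
-/

open Finset Nat

theorem eq_sub_sum_Icc_of_eq_sub {G : Type*} [AddCommGroup G] {c d : ℕ → G}
    (h : ∀ n, 2 ≤ n → c n = c (n - 1) - d n) {n : ℕ} (hn : 1 ≤ n) :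
    c n = c 1 - ∑ k ∈ Icc 2 n, d k := by
  induction n, hn using Nat.le_induction with
  | base => simp
  | succ n hn ih =>
    rw [h (n + 1) (by omega), add_tsub_cancel_right, ih, sum_Icc_succ_top (by omega), sub_sub]

theorem two_mul_sub_one_div_sub_one_mul_eq {K : Type*} [Field K] {x : K} (h₀ : x ≠ 0)
    (h₁ : x - 1 ≠ 0) : (2 * x - 1) / ((x - 1) * x) = 1 / x + 1 / (x - 1) := by
  field_simp
  ring

theorem factorial_mul_factorial_pred_eq {n : ℕ} (hn : 2 ≤ n) :
    (n ! * (n - 1)! : ℝ) = ((n : ℝ) - 1) * n * ((n - 1)! * (n - 1 - 1)!) := by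
  obtain ⟨m, rfl⟩ : ∃ m, n = m + 2 := ⟨n - 2, by omega⟩
  simp only [add_tsub_cancel_right, show m + 2 - 1 = m + 1 by omega, factorial_succ]
  push_cast
  ring

/-- The recurrence `b_n = p_n b_{n-1} - q_n p_n` (`n ≥ 2`), with `p_k = 1/((k-1)k)` and
`q_k = (2k-1)/((k-1)!·k!)`, has solution `b_n = (b₁ - 2ξ̃_n)/(n!·(n-1)!)`, where
`ξ̃_n = (1/2)·∑_{k=2}^n (1/k + 1/(k-1))`. -/
theorem recurrence_solution (b : ℕ → ℝ) (p q : ℕ → ℝ)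
    (hp : ∀ k : ℕ, 2 ≤ k → p k = 1 / (((k : ℝ) - 1) * k))
    (hq : ∀ k : ℕ, 2 ≤ k →
      q k = (2 * (k : ℝ) - 1) / ((Nat.factorial (k - 1) : ℝ) * (Nat.factorial k)))
    (hrec : ∀ n : ℕ, 2 ≤ n → b n = p n * b (n - 1) - q n * p n) :
    ∀ n : ℕ, 2 ≤ n →
      b n = (b 1 - 2 * ((1 / 2) * ∑ k ∈ Finset.Icc 2 n, ((1 : ℝ) / k + 1 / ((k : ℝ) - 1))))
        / ((Nat.factorial n : ℝ) * (Nat.factorial (n - 1))) := by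
  set w : ℕ → ℝ := fun n ↦ n ! * (n - 1)!
  have hstep : ∀ n, 2 ≤ n →
      w n * b n = w (n - 1) * b (n - 1) - (1 / (n : ℝ) + 1 / ((n : ℝ) - 1)) := by
    intro n hn
    have h₀ : (n : ℝ) ≠ 0 := by positivity
    have h₁ : (n : ℝ) - 1 ≠ 0 := by
      rw [sub_ne_zero]; exact_mod_cast (by omega : n ≠ 1)
    have hpw : p n * w n = w (n - 1) := by
      simp only [w]
      rw [hp n hn, factorial_mul_factorial_pred_eq hn]
      field_simp
    have hqw : q n * w n = 2 * n - 1 := by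
      simp only [w]
      rw [hq n hn]
      field_simp
    rw [← two_mul_sub_one_div_sub_one_mul_eq h₀ h₁, ← hqw, ← hpw, hrec n hn, hp n hn]
    ring
  intro n hn
  have hsum := eq_sub_sum_Icc_of_eq_sub hstep (n := n) (by omega)
  rw [eq_div_iff (by positivity), mul_comm, ← mul_assoc, mul_one_div_cancel two_ne_zero, one_mul]
  simpa [w] using hsum
end

section
/- If R(ε) is the smallest solution in (0, 2α) of ε = -2R·ln(R/(2α)) with α = e^{-(γ+1)}, then R(ε) ~ -ε/(2 ln ε) as ε → 0⁺, i.e. the ratio R(ε)·(−2 ln ε)/ε tends to 1. -/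
open Filter

/-- If `R(ε)` is the smallest solution in `(0, 2α)` of `ε = -2R·ln(R/(2α))`, with
`α = e^{-(γ+1)}`, then `R(ε) ~ -ε/(2 ln ε)` as `ε → 0⁺`, i.e.
`R(ε)·(-2 ln ε)/ε → 1`. -/
theorem skyrmion_radius_asymptotics (R : ℝ → ℝ) (ε₀ : ℝ) (hε₀ : 0 < ε₀)
    (hsol : ∀ ε : ℝ, 0 < ε → ε < ε₀ →
      R ε ∈ Set.Ioo (0 : ℝ) (2 * Real.exp (-(Real.eulerMascheroniConstant + 1))) ∧
      ε = -2 * R ε * Real.log (R ε /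
            (2 * Real.exp (-(Real.eulerMascheroniConstant + 1)))) ∧
      ∀ R' ∈ Set.Ioo (0 : ℝ) (2 * Real.exp (-(Real.eulerMascheroniConstant + 1))),
        ε = -2 * R' * Real.log (R' /
              (2 * Real.exp (-(Real.eulerMascheroniConstant + 1)))) → R ε ≤ R') :
    Tendsto (fun ε : ℝ => R ε * (-2 * Real.log ε) / ε)
      (nhdsWithin 0 (Set.Ioi 0)) (nhds 1) := by
  set c : ℝ := 2 * Real.exp (-(Real.eulerMascheroniConstant + 1)) with hcdef
  have hc0 : 0 < c := by positivity
  -- the continuous extension of `x ↦ -2x log(x/c)`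
  set g : ℝ → ℝ := fun x => -2 * (x * Real.log x) + (2 * Real.log c) * x with hgdef
  have hgcont : Continuous g := by
    apply Continuous.add
    · exact continuous_const.mul Real.continuous_mul_log
    · exact continuous_const.mul continuous_id
  have hgkey : ∀ x : ℝ, 0 < x → -2 * x * Real.log (x / c) = g x := by
    intro x hx
    rw [hgdef]
    simp only
    rw [Real.log_div hx.ne' hc0.ne']
    ring
  have hg0 : g 0 = 0 := by simp [hgdef]
  -- the solutions eventually stay below any positive bound
  have hRlt : ∀ b : ℝ, 0 < b → ∀ᶠ ε in nhdsWithin (0:ℝ) (Set.Ioi 0), R ε < b := by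
    intro b hb
    set δ : ℝ := min (b / 2) (c / 2) with hδdef
    have hδ0 : 0 < δ := lt_min (by linarith) (by linarith)
    have hδb : δ < b := lt_of_le_of_lt (min_le_left _ _) (by linarith)
    have hδc : δ < c := lt_of_le_of_lt (min_le_right _ _) (by linarith)
    have hlogneg : Real.log (δ / c) < 0 :=
      Real.log_neg (div_pos hδ0 hc0) ((div_lt_one hc0).2 hδc)
    have hgδ : 0 < g δ := by
      rw [← hgkey δ hδ0]; nlinarith
    have hmem : Set.Ioo (0:ℝ) (min ε₀ (g δ)) ∈ nhdsWithin (0:ℝ) (Set.Ioi 0) :=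
      Ioo_mem_nhdsGT_of_mem ⟨le_rfl, lt_min hε₀ hgδ⟩
    filter_upwards [hmem] with ε hε
    obtain ⟨hε0, hεlt⟩ := hε
    have hεε₀ : ε < ε₀ := lt_of_lt_of_le hεlt (min_le_left _ _)
    have hεgδ : ε ≤ g δ := le_of_lt (lt_of_lt_of_le hεlt (min_le_right _ _))
    obtain ⟨hRmem, heq, hmin⟩ := hsol ε hε0 hεε₀
    have hivt : ε ∈ Set.Icc (g 0) (g δ) := by
      rw [hg0]; exact ⟨hε0.le, hεgδ⟩
    obtain ⟨x, hx, hgx⟩ := intermediate_value_Icc hδ0.le hgcont.continuousOn hivt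
    have hx0 : 0 < x := by
      rcases hx.1.lt_or_eq with h | h
      · exact h
      · exfalso; rw [← h, hg0] at hgx; exact hε0.ne hgx
    have hxc : x < c := lt_of_le_of_lt hx.2 hδc
    have hxsol : ε = -2 * x * Real.log (x / c) := by
      rw [hgkey x hx0]; exact hgx.symm
    have := hmin x ⟨hx0, hxc⟩ hxsol
    exact lt_of_le_of_lt (this.trans hx.2) hδb
  have hmem₀ : Set.Ioo (0:ℝ) ε₀ ∈ nhdsWithin (0:ℝ) (Set.Ioi 0) :=
    Ioo_mem_nhdsGT_of_mem ⟨le_rfl, hε₀⟩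
  have hRpos : ∀ᶠ ε in nhdsWithin (0:ℝ) (Set.Ioi 0), 0 < R ε := by
    filter_upwards [hmem₀] with ε hε
    exact (hsol ε hε.1 hε.2).1.1
  -- R tends to 0 from the right
  have hRtend : Tendsto R (nhdsWithin (0:ℝ) (Set.Ioi 0))
      (nhdsWithin (0:ℝ) (Set.Ioi 0)) := by
    rw [tendsto_nhdsWithin_iff]
    constructor
    · rw [tendsto_order]
      constructor
      · intro a ha
        filter_upwards [hRpos] with ε hε
        exact lt_trans ha hε
      · intro b hb
        exact hRlt b hb
    · filter_upwards [hRpos] with ε hε using hε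
  -- u ε := -log (R ε / c) tends to atTop
  have hRc : Tendsto (fun ε => R ε / c) (nhdsWithin (0:ℝ) (Set.Ioi 0))
      (nhdsWithin (0:ℝ) (Set.Ioi 0)) := by
    rw [tendsto_nhdsWithin_iff]
    constructor
    · have := (tendsto_nhdsWithin_iff.1 hRtend).1.div_const c
      simpa using this
    · filter_upwards [hRpos] with ε hε
      exact div_pos hε hc0
  set u : ℝ → ℝ := fun ε => -Real.log (R ε / c) with hudef
  have hutend : Tendsto u (nhdsWithin (0:ℝ) (Set.Ioi 0)) atTop := by
    have h1 : Tendsto (fun ε => Real.log (R ε / c)) (nhdsWithin (0:ℝ) (Set.Ioi 0))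
        atBot := Real.tendsto_log_nhdsGT_zero.comp hRc
    exact Filter.tendsto_neg_atBot_atTop.comp h1
  -- the limit of the auxiliary expression
  have hlim0 : Tendsto (fun t : ℝ => (Real.log (2 * c) + Real.log t) / t) atTop
      (nhds 0) := by
    have h1 : Tendsto (fun t : ℝ => Real.log (2 * c) / t) atTop (nhds 0) :=
      tendsto_const_nhds.div_atTop tendsto_id
    have h2 : Tendsto (fun t : ℝ => Real.log t / t) atTop (nhds 0) :=
      Real.isLittleO_log_id_atTop.tendsto_div_nhds_zero
    have := h1.add h2
    rw [add_zero] at this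
    apply this.congr
    intro t
    rw [add_div]
  have hlim : Tendsto (fun ε => 1 - (Real.log (2 * c) + Real.log (u ε)) / (u ε))
      (nhdsWithin (0:ℝ) (Set.Ioi 0)) (nhds 1) := by
    have := (tendsto_const_nhds : Tendsto (fun _ : ℝ => (1:ℝ))
        (nhdsWithin (0:ℝ) (Set.Ioi 0)) (nhds 1)).sub (hlim0.comp hutend)
    rw [sub_zero] at this
    exact this
  -- eventual equality of the two expressions
  apply hlim.congr'
  filter_upwards [hmem₀] with ε hε
  obtain ⟨hRmem, heq, -⟩ := hsol ε hε.1 hε.2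
  obtain ⟨hR0, hRc'⟩ := hRmem
  have hlogRc : Real.log (R ε / c) < 0 :=
    Real.log_neg (div_pos hR0 hc0) ((div_lt_one hc0).2 hRc')
  have hu0 : 0 < u ε := by rw [hudef]; simpa using hlogRc
  have hεRu : ε = 2 * R ε * u ε := by
    have : u ε = -Real.log (R ε / c) := rfl
    rw [this]
    conv_lhs => rw [heq]
    ring
  have hlogε : Real.log ε = Real.log (2 * c) - u ε + Real.log (u ε) := by
    conv_lhs => rw [hεRu]
    rw [Real.log_mul (mul_pos two_pos hR0).ne' hu0.ne',
      Real.log_mul two_ne_zero hR0.ne', Real.log_mul two_ne_zero hc0.ne']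
    have hR : Real.log (R ε) = -(u ε) + Real.log c := by
      have : u ε = -Real.log (R ε / c) := rfl
      rw [this, Real.log_div hR0.ne' hc0.ne']
      ring
    rw [hR]
    ring
  set v := u ε with hv
  set r := R ε with hr
  rw [hlogε, hεRu]
  have hr0 : r ≠ 0 := hR0.ne'
  have hv0 : v ≠ 0 := hu0.ne'
  field_simp
  ring
end
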